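/- Let A ⊂ ℂ be a finite nonempty signal constellation. Then the MMSE function of A tends, as snr → 0⁺, to the variance of the uniform distribution on A: lim_{snr→0⁺} mmse_A(snr) = (1/|A|) Σ_{a∈A} |a|² − | (1/|A|) Σ_{a∈A} a |². -/

import Mathlib

/-!
The integrand of `mmse` is `‖E[x | y]‖² · exp (-‖z‖²)`, where the posterior mean `E[x | y]` is a
convex combination of the points of `A` with positive weights, hence bounded by `∑ a ∈ A, ‖a‖`,
and depends continuously on `√snr`. Dominated convergence (against the Gaussian) therefore makes
the integral continuous in `√snr`; at `√snr = 0` all weights coincide, the posterior mean is the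
mean of `A`, and the integral is `π ‖mean A‖²`.
-/

open MeasureTheory Finset Filter

/-- Minimum mean-squared error in estimating the input, uniform on the finite
constellation `A ⊂ ℂ`, from the output of the complex Gaussian channel
`y = √snr · x + z` with noise density `(1/π) exp(-|z|²)`. -/
noncomputable def mmse (A : Finset ℂ) (snr : ℝ) : ℝ :=
  (1 / (A.card : ℝ)) * ∑ a ∈ A, (Norm.norm a) ^ 2
  - (1 / (A.card : ℝ)) * ∑ a ∈ A, (1 / Real.pi) *
      ∫ z : ℂ, (Norm.norm
          ((∑ a' ∈ A, a' * (Real.exp (-(Norm.norm ((Real.sqrt snr : ℂ) * (a - a') + z)) ^ 2) : ℂ)) /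
           (∑ a' ∈ A, (Real.exp (-(Norm.norm ((Real.sqrt snr : ℂ) * (a - a') + z)) ^ 2) : ℂ)))) ^ 2
        * Real.exp (-(Norm.norm z) ^ 2)

noncomputable def weightedMean (A : Finset ℂ) (w : ℂ → ℝ) : ℂ :=
  (∑ a ∈ A, a * (w a : ℂ)) / ∑ a ∈ A, (w a : ℂ)

lemma norm_weightedMean_le (A : Finset ℂ) {w : ℂ → ℝ} (hw : ∀ a ∈ A, 0 ≤ w a) :
    ‖weightedMean A w‖ ≤ ∑ a ∈ A, ‖a‖ := by
  have hden : ‖∑ a ∈ A, (w a : ℂ)‖ = ∑ a ∈ A, w a := by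
    rw [← Complex.ofReal_sum, Complex.norm_real, Real.norm_of_nonneg (sum_nonneg hw)]
  rw [weightedMean, norm_div, hden]
  refine div_le_of_le_mul₀ (sum_nonneg hw) (sum_nonneg fun a _ => norm_nonneg a) ?_
  calc ‖∑ a ∈ A, a * (w a : ℂ)‖ ≤ ∑ a ∈ A, ‖a‖ * w a := by
        refine (norm_sum_le _ _).trans (sum_le_sum fun a ha => ?_)
        rw [norm_mul, Complex.norm_real, Real.norm_of_nonneg (hw a ha)]
    _ ≤ ∑ a ∈ A, (∑ b ∈ A, ‖b‖) * w a := by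
        gcongr with a ha
        · exact hw a ha
        · exact single_le_sum (fun b _ => norm_nonneg b) ha
    _ = (∑ a ∈ A, ‖a‖) * ∑ a ∈ A, w a := by rw [mul_sum]

lemma weightedMean_const (A : Finset ℂ) {c : ℝ} (hc : c ≠ 0) :
    weightedMean A (fun _ => c) = (1 / (A.card : ℂ)) * ∑ a ∈ A, a := by
  rw [weightedMean, ← sum_mul, sum_const, nsmul_eq_mul,
    mul_div_mul_right _ _ (Complex.ofReal_ne_zero.mpr hc), one_div, inv_mul_eq_div]

/-- The posterior mean of the input given the output `y = t * a + z`: the Gaussian likelihood of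
`a'` is `exp (-‖y - t * a'‖ ^ 2) = exp (-‖t * (a - a') + z‖ ^ 2)`. -/
noncomputable def posteriorMean (A : Finset ℂ) (a t z : ℂ) : ℂ :=
  weightedMean A fun a' => Real.exp (-‖t * (a - a') + z‖ ^ 2)

lemma continuous_posteriorMean {A : Finset ℂ} (hA : A.Nonempty) (a : ℂ) :
    Continuous fun p : ℂ × ℂ => posteriorMean A a p.1 p.2 := by
  have hden : ∀ p : ℂ × ℂ, ∑ a' ∈ A, ((Real.exp (-‖p.1 * (a - a') + p.2‖ ^ 2) : ℝ) : ℂ) ≠ 0 :=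
    fun p => by
      rw [← Complex.ofReal_sum]
      exact Complex.ofReal_ne_zero.mpr (sum_pos (fun _ _ => Real.exp_pos _) hA).ne'
  unfold posteriorMean weightedMean
  exact Continuous.div (by fun_prop) (by fun_prop) hden

lemma integral_exp_neg_norm_sq_complex : ∫ z : ℂ, Real.exp (-‖z‖ ^ 2) = Real.pi := by
  simpa using GaussianFourier.integral_rexp_neg_mul_sq_norm (V := ℂ) one_pos

lemma integrable_exp_neg_norm_sq_complex : Integrable fun z : ℂ => Real.exp (-‖z‖ ^ 2) :=
  Integrable.of_integral_ne_zero (integral_exp_neg_norm_sq_complex ▸ Real.pi_ne_zero)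

noncomputable def mmseIntegral (A : Finset ℂ) (a t : ℂ) : ℝ :=
  ∫ z : ℂ, ‖posteriorMean A a t z‖ ^ 2 * Real.exp (-‖z‖ ^ 2)

lemma continuous_mmseIntegral {A : Finset ℂ} (hA : A.Nonempty) (a : ℂ) :
    Continuous (mmseIntegral A a) := by
  have hcont := continuous_posteriorMean hA a
  refine continuous_of_dominated (bound := fun z => (∑ b ∈ A, ‖b‖) ^ 2 * Real.exp (-‖z‖ ^ 2))
    (fun t => ?_) (fun t => ae_of_all _ fun z => ?_)
    (integrable_exp_neg_norm_sq_complex.const_mul _) (ae_of_all _ fun z => ?_)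
  · have : Continuous fun z : ℂ => ‖posteriorMean A a t z‖ ^ 2 * Real.exp (-‖z‖ ^ 2) := by
      fun_prop
    exact this.aestronglyMeasurable
  · rw [Real.norm_of_nonneg (by positivity)]
    gcongr
    exact norm_weightedMean_le A fun _ _ => (Real.exp_pos _).le
  · fun_prop

lemma mmseIntegral_zero (A : Finset ℂ) (a : ℂ) :
    mmseIntegral A a 0 = ‖(1 / (A.card : ℂ)) * ∑ b ∈ A, b‖ ^ 2 * Real.pi := by
  simp only [mmseIntegral, posteriorMean, zero_mul, zero_add]
  simp_rw [weightedMean_const A (Real.exp_pos _).ne']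
  rw [integral_const_mul, integral_exp_neg_norm_sq_complex]

/-- As `snr → 0⁺`, the MMSE of a finite nonempty constellation `A ⊂ ℂ` tends to
the variance of the uniform distribution on `A`. -/
theorem mmse_tendsto_variance (A : Finset ℂ) (hA : A.Nonempty) :
    Tendsto (fun snr => mmse A snr) (nhdsWithin 0 (Set.Ioi 0))
      (nhds ((1 / (A.card : ℝ)) * ∑ a ∈ A, (Norm.norm a) ^ 2
        - (Norm.norm ((1 / (A.card : ℂ)) * ∑ a ∈ A, a)) ^ 2)) := by
  have hmmse : ∀ snr, mmse A snr = (1 / (A.card : ℝ)) * ∑ a ∈ A, ‖a‖ ^ 2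
      - (1 / (A.card : ℝ)) * ∑ a ∈ A, (1 / Real.pi) * mmseIntegral A a (Real.sqrt snr) :=
    fun _ => rfl
  have hsqrt : Tendsto (fun snr : ℝ => (Real.sqrt snr : ℂ)) (nhdsWithin 0 (Set.Ioi 0))
      (nhds 0) := by
    have : Continuous fun snr : ℝ => (Real.sqrt snr : ℂ) := by fun_prop
    simpa using (this.tendsto 0).mono_left nhdsWithin_le_nhds
  have hlim : ∀ a ∈ A, Tendsto (fun snr => mmseIntegral A a (Real.sqrt snr))
      (nhdsWithin 0 (Set.Ioi 0)) (nhds (‖(1 / (A.card : ℂ)) * ∑ b ∈ A, b‖ ^ 2 * Real.pi)) :=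
    fun a _ => mmseIntegral_zero A a ▸ ((continuous_mmseIntegral hA a).tendsto 0).comp hsqrt
  simp_rw [hmmse]
  convert tendsto_const_nhds.sub ((tendsto_finsetSum A fun a ha => (hlim a ha).const_mul
    (1 / Real.pi)).const_mul (1 / (A.card : ℝ))) using 2
  have hcard : (A.card : ℝ) ≠ 0 := by exact_mod_cast hA.card_pos.ne'
  rw [sum_const, nsmul_eq_mul]
  field_simp
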